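/- The point E₃ = (0, ν/β, (lKrβ - lKbν - μrβ)/(rβ²), K(rβ - bν)/(rβ)) is an equilibrium of the logistic ecoepidemic system, and all its coordinates are nonnegative if and only if rβ(lK - μ) ≥ bKlν (which in particular implies rβ ≥ bν when lK > μ). -/

import Mathlib

/-! Once the predator is absent, `E₃` solves the remaining three equations directly. Its
third coordinate has the sign of `rβ(lK - μ) - bKlν`, its fourth the sign of `rβ - bν`, and
since `μ > 0` the first being nonnegative forces `rβ lK > bKlν`, i.e. `rβ > bν`. -/

open Polynomial

noncomputable def logisticRHS (g f τ l β q μ c ν r b K : ℝ) (x : Fin 4 → ℝ) : Fin 4 → ℝ :=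
  ![x 0 * (g * x 2 + f * x 1 - τ),
    x 1 * (l * x 3 - β * x 2 - q * x 0 - μ),
    x 2 * (β * x 1 - c * x 0 - ν),
    x 3 * (r * (1 - x 3 / K) - b * x 1)]

noncomputable def logisticJac (g f τ l β q μ c ν r b K : ℝ) (x : Fin 4 → ℝ) :
    Matrix (Fin 4) (Fin 4) ℝ :=
  Matrix.of ![
    ![g * x 2 + f * x 1 - τ, f * x 0, g * x 0, 0],
    ![-(q * x 1), l * x 3 - β * x 2 - q * x 0 - μ, -(β * x 1), l * x 1],
    ![-(c * x 2), β * x 2, β * x 1 - c * x 0 - ν, 0],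
    ![0, -(b * x 3), 0, r * (1 - x 3 / K) - b * x 1 - r * x 3 / K]]

namespace Logistic

variable {g f τ l β q μ c ν r b K : ℝ}

noncomputable def equilibriumE₃ (l β μ ν r b K : ℝ) : Fin 4 → ℝ :=
  ![0, ν / β, (l * K * r * β - l * K * b * ν - μ * r * β) / (r * β ^ 2),
    K * (r * β - b * ν) / (r * β)]

theorem logisticRHS_equilibriumE₃ (hβ : β ≠ 0) (hr : r ≠ 0) (hK : K ≠ 0) :
    logisticRHS g f τ l β q μ c ν r b K (equilibriumE₃ l β μ ν r b K) = 0 := by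
  funext i
  fin_cases i
  · exact zero_mul _
  all_goals
    refine mul_eq_zero_of_right _ ?_
    simp only [equilibriumE₃, Matrix.cons_val]
    field_simp
    ring

theorem infectedE₃_nonneg_iff (hr : 0 < r) (hβ : 0 < β) :
    0 ≤ (l * K * r * β - l * K * b * ν - μ * r * β) / (r * β ^ 2) ↔
      b * K * l * ν ≤ r * β * (l * K - μ) := by
  have hnum : l * K * r * β - l * K * b * ν - μ * r * β =
      r * β * (l * K - μ) - b * K * l * ν := by
    ring
  rw [le_div_iff₀ (by positivity), zero_mul, hnum, sub_nonneg]

theorem resourceE₃_nonneg_iff (hK : 0 < K) (hrβ : 0 < r * β) :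
    0 ≤ K * (r * β - b * ν) / (r * β) ↔ b * ν ≤ r * β := by
  rw [le_div_iff₀ hrβ, zero_mul, mul_nonneg_iff_of_pos_left hK, sub_nonneg]

theorem bν_le_rβ_of_threshold (hl : 0 < l) (hK : 0 < K) (hμ : 0 ≤ μ) (hrβ : 0 ≤ r * β)
    (h : b * K * l * ν ≤ r * β * (l * K - μ)) : b * ν ≤ r * β := by
  have hlK : 0 < l * K := mul_pos hl hK
  refine le_of_mul_le_mul_right ?_ hlK
  calc b * ν * (l * K) = b * K * l * ν := by ring
    _ ≤ r * β * (l * K - μ) := h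
    _ ≤ r * β * (l * K) := mul_le_mul_of_nonneg_left (by linarith) hrβ

end Logistic

open Logistic in
theorem stmt12_general (g f τ l β q μ c ν r b K : ℝ)
    (hl : 0 < l) (hβ : 0 < β)
    (hμ : 0 < μ) (hν : 0 < ν) (hr : 0 < r)
    (hK : 0 < K) :
    logisticRHS g f τ l β q μ c ν r b K
      ![0, ν / β, (l * K * r * β - l * K * b * ν - μ * r * β) / (r * β ^ 2),
        K * (r * β - b * ν) / (r * β)] = 0 ∧
    (((0:ℝ) ≤ 0 ∧ 0 ≤ ν / β ∧
        0 ≤ (l * K * r * β - l * K * b * ν - μ * r * β) / (r * β ^ 2) ∧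
        0 ≤ K * (r * β - b * ν) / (r * β)) ↔
      b * K * l * ν ≤ r * β * (l * K - μ)) ∧
    (μ < l * K → b * K * l * ν ≤ r * β * (l * K - μ) → b * ν ≤ r * β) := by
  have hrβ : 0 < r * β := mul_pos hr hβ
  have hbν := bν_le_rβ_of_threshold (b := b) (ν := ν) hl hK hμ.le hrβ.le
  refine ⟨logisticRHS_equilibriumE₃ hβ.ne' hr.ne' hK.ne', ⟨?_, ?_⟩, fun _ => hbν⟩
  · rintro ⟨-, -, hI, -⟩
    exact (infectedE₃_nonneg_iff hr hβ).mp hI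
  · intro h
    exact ⟨le_rfl, div_nonneg hν.le hβ.le, (infectedE₃_nonneg_iff hr hβ).mpr h,
      (resourceE₃_nonneg_iff hK hrβ).mpr (hbν h)⟩

theorem stmt12 (g f τ l β q μ c ν r b K : ℝ)
    (hg : 0 < g) (hf : 0 < f) (hτ : 0 < τ) (hl : 0 < l) (hβ : 0 < β)
    (hq : 0 < q) (hμ : 0 < μ) (hc : 0 < c) (hν : 0 < ν) (hr : 0 < r) (hb : 0 < b)
    (hK : 0 < K) :
    logisticRHS g f τ l β q μ c ν r b K
      ![0, ν / β, (l * K * r * β - l * K * b * ν - μ * r * β) / (r * β ^ 2),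
        K * (r * β - b * ν) / (r * β)] = 0 ∧
    (((0:ℝ) ≤ 0 ∧ 0 ≤ ν / β ∧
        0 ≤ (l * K * r * β - l * K * b * ν - μ * r * β) / (r * β ^ 2) ∧
        0 ≤ K * (r * β - b * ν) / (r * β)) ↔
      b * K * l * ν ≤ r * β * (l * K - μ)) ∧
    (μ < l * K → b * K * l * ν ≤ r * β * (l * K - μ) → b * ν ≤ r * β) :=
  stmt12_general g f τ l β q μ c ν r b K hl hβ hμ hν hr hK
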